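/- Let Y_ε be the unit sphere S^m with threads attached between paired points q, q' of chordal length L = d_E(q, q'), for pairs chosen on the boundaries of an ε-net of disjoint geodesic balls of radius ε whose doubles cover S^m. Then for all x, y ∈ S^m, d_E(x,y) ≤ d_{Y_ε}(x,y) ≤ d_E(x,y) + 12ε. -/
import Mathlib



section Aux

open Real

variable {E : Type*} [NormedAddCommGroup E] [InnerProductSpace ℝ E]

lemma abs_inner_le_one' {x y : E} (hx : ‖x‖ = 1) (hy : ‖y‖ = 1) :
    |inner (𝕜 := ℝ) x y| ≤ 1 := by
  have := abs_real_inner_le_norm x y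
  simpa [hx, hy] using this

lemma chord_le_arccos {x y : E} (hx : ‖x‖ = 1) (hy : ‖y‖ = 1) :
    ‖x - y‖ ≤ Real.arccos (inner (𝕜 := ℝ) x y) := by
  set a : ℝ := inner (𝕜 := ℝ) x y with ha
  have habs := abs_inner_le_one' hx hy
  have h1 : -1 ≤ a := neg_le_of_abs_le habs
  have h2 : a ≤ 1 := le_of_abs_le habs
  set θ := Real.arccos a with hθ
  have hθ0 : 0 ≤ θ := Real.arccos_nonneg a
  have hcos : Real.cos θ = a := Real.cos_arccos h1 h2
  have hnorm : ‖x - y‖ ^ 2 = 2 - 2 * a := by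
    rw [← real_inner_self_eq_norm_sq]
    simp only [inner_sub_left, inner_sub_right, real_inner_self_eq_norm_sq, hx, hy,
      real_inner_comm x y, ← ha]
    ring
  have hsin : Real.sin (θ / 2) ≤ θ / 2 := Real.sin_le (by linarith)
  have hsin0 : 0 ≤ Real.sin (θ / 2) := Real.sin_nonneg_of_nonneg_of_le_pi (by linarith)
    (by have := Real.arccos_le_pi a; rw [← hθ] at this; linarith [Real.pi_pos])
  have hcos2 : Real.cos θ = 1 - 2 * Real.sin (θ / 2) ^ 2 := by
    have h1 : Real.cos (2 * (θ / 2)) = 2 * Real.cos (θ / 2) ^ 2 - 1 := Real.cos_two_mul _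
    have h2 := Real.sin_sq_add_cos_sq (θ / 2)
    rw [show 2 * (θ / 2) = θ by ring] at h1
    linarith
  have hsq : ‖x - y‖ ^ 2 ≤ θ ^ 2 := by
    rw [hnorm, ← hcos, hcos2]
    nlinarith [hsin, hsin0]
  nlinarith [norm_nonneg (x - y), hθ0, hsq]

lemma arccos_inner_triangle {x y z : E} (hx : ‖x‖ = 1) (hy : ‖y‖ = 1) (hz : ‖z‖ = 1) :
    Real.arccos (inner (𝕜 := ℝ) x z) ≤
      Real.arccos (inner (𝕜 := ℝ) x y) + Real.arccos (inner (𝕜 := ℝ) y z) := by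
  set a : ℝ := inner (𝕜 := ℝ) x y with ha
  set b : ℝ := inner (𝕜 := ℝ) y z with hb
  set c : ℝ := inner (𝕜 := ℝ) x z with hc
  have haa := abs_inner_le_one' hx hy
  have hbb := abs_inner_le_one' hy hz
  have hcc := abs_inner_le_one' hx hz
  set α := Real.arccos a with hα
  set β := Real.arccos b with hβ
  have hα0 : 0 ≤ α := Real.arccos_nonneg a
  have hβ0 : 0 ≤ β := Real.arccos_nonneg b
  by_cases hπ : π ≤ α + β
  · exact le_trans (Real.arccos_le_pi c) hπ
  push_neg at hπ
  have hcosα : Real.cos α = a := Real.cos_arccos (neg_le_of_abs_le haa) (le_of_abs_le haa)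
  have hcosβ : Real.cos β = b := Real.cos_arccos (neg_le_of_abs_le hbb) (le_of_abs_le hbb)
  have hsinα : Real.sin α = Real.sqrt (1 - a ^ 2) := Real.sin_arccos a
  have hsinβ : Real.sin β = Real.sqrt (1 - b ^ 2) := Real.sin_arccos b
  -- Cauchy-Schwarz on u = x - a•y, v = z - b•y
  set u := x - a • y with hu
  set v := z - b • y with hv
  have huv : inner (𝕜 := ℝ) u v = c - a * b := by
    simp only [hu, hv, inner_sub_left, inner_sub_right, real_inner_smul_left,
      real_inner_smul_right, real_inner_self_eq_norm_sq, hy,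
      real_inner_comm x y, real_inner_comm y z, ← ha, ← hb, ← hc]
    ring
  have hun : ‖u‖ = Real.sqrt (1 - a ^ 2) := by
    have : ‖u‖ ^ 2 = 1 - a ^ 2 := by
      rw [← real_inner_self_eq_norm_sq]
      simp only [hu, inner_sub_left, inner_sub_right, real_inner_smul_left,
        real_inner_smul_right, real_inner_self_eq_norm_sq, hx, hy, norm_smul,
        Real.norm_eq_abs, mul_one, sq_abs, real_inner_comm x y, ← ha]
      ring
    rw [← this, Real.sqrt_sq (norm_nonneg u)]
  have hvn : ‖v‖ = Real.sqrt (1 - b ^ 2) := by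
    have : ‖v‖ ^ 2 = 1 - b ^ 2 := by
      rw [← real_inner_self_eq_norm_sq]
      simp only [hv, inner_sub_left, inner_sub_right, real_inner_smul_left,
        real_inner_smul_right, real_inner_self_eq_norm_sq, hy, hz, norm_smul,
        Real.norm_eq_abs, mul_one, sq_abs, real_inner_comm y z, ← hb]
      ring
    rw [← this, Real.sqrt_sq (norm_nonneg v)]
  have hCS : |inner (𝕜 := ℝ) u v| ≤ ‖u‖ * ‖v‖ := abs_real_inner_le_norm u v
  have hkey : Real.cos (α + β) ≤ c := by
    rw [Real.cos_add, hcosα, hcosβ, hsinα, hsinβ]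
    have : -(‖u‖ * ‖v‖) ≤ c - a * b := by
      rw [← huv]; exact neg_le_of_abs_le hCS
    rw [hun, hvn] at this
    linarith
  calc Real.arccos c ≤ Real.arccos (Real.cos (α + β)) := by
        have : Real.arccos = fun t => π / 2 - Real.arcsin t := by
          funext t; rw [Real.arccos]
        rw [this]
        simp only
        have := Real.monotone_arcsin hkey
        linarith
    _ = α + β := Real.arccos_cos (by linarith) (le_of_lt hπ)

end Aux

/-- Cost of an itinerary through attached threads: see the pipe-filling construction. -/
def threadCost {α ι : Type*} (d : α → α → ℝ) (p q : ι → α) (L : ι → ℝ) :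
    α → α → List (ι × Bool) → ℝ
  | a, b, [] => d a b
  | a, b, (k, true) :: rest => d a (p k) + L k + threadCost d p q L (q k) b rest
  | a, b, (k, false) :: rest => d a (q k) + L k + threadCost d p q L (p k) b rest

/-- The induced length-type distance on the base space after attaching threads. -/
noncomputable def threadDist {α ι : Type*} (d : α → α → ℝ) (p q : ι → α) (L : ι → ℝ)
    (a b : α) : ℝ :=
  sInf {c : ℝ | ∃ l : List (ι × Bool), c = threadCost d p q L a b l}

/-- `Y_ε` is the round unit sphere `(S^m, d_S)` with threads of chordal length
`L = d_E(q,q')` attached between paired points `q = Q i j ∈ ∂B_{P i}(ε)` and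
`q' = Q j i ∈ ∂B_{P j}(ε)`, where the geodesic balls `B_{P i}(ε)` are pairwise
disjoint and the doubled balls `B_{P i}(2ε)` cover the sphere. Then the induced
length metric `d_{Y_ε}` restricted to the sphere satisfies
`d_E(x,y) ≤ d_{Y_ε}(x,y) ≤ d_E(x,y) + 12ε`. -/
theorem sphere_with_threads_dist_estimate (m N : ℕ) (ε : ℝ) (hε : 0 < ε)
    (P : Fin N → Metric.sphere (0 : EuclideanSpace ℝ (Fin (m + 1))) 1)
    (Q : Fin N → Fin N → Metric.sphere (0 : EuclideanSpace ℝ (Fin (m + 1))) 1)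
    (dS : Metric.sphere (0 : EuclideanSpace ℝ (Fin (m + 1))) 1 →
      Metric.sphere (0 : EuclideanSpace ℝ (Fin (m + 1))) 1 → ℝ)
    (hdS : ∀ x y, dS x y = Real.arccos (inner (𝕜 := ℝ)
      (x : EuclideanSpace ℝ (Fin (m + 1))) (y : EuclideanSpace ℝ (Fin (m + 1)))))
    (hdisj : ∀ i j, i ≠ j → 2 * ε ≤ dS (P i) (P j))
    (hcover : ∀ x, ∃ i, dS x (P i) < 2 * ε)
    (hQ : ∀ i j, dS (P i) (Q i j) = ε) :
    ∀ x y : Metric.sphere (0 : EuclideanSpace ℝ (Fin (m + 1))) 1,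
      dist x y ≤
        threadDist dS (fun k : Fin N × Fin N => Q k.1 k.2)
          (fun k : Fin N × Fin N => Q k.2 k.1)
          (fun k : Fin N × Fin N => dist (Q k.1 k.2) (Q k.2 k.1)) x y ∧
      threadDist dS (fun k : Fin N × Fin N => Q k.1 k.2)
          (fun k : Fin N × Fin N => Q k.2 k.1)
          (fun k : Fin N × Fin N => dist (Q k.1 k.2) (Q k.2 k.1)) x y ≤
        dist x y + 12 * ε := by
  intro x y
  have hnorm : ∀ z : Metric.sphere (0 : EuclideanSpace ℝ (Fin (m + 1))) 1,
      ‖(z : EuclideanSpace ℝ (Fin (m + 1)))‖ = 1 := fun z => by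
    simpa using mem_sphere_zero_iff_norm.mp z.2
  have hchord : ∀ a b : Metric.sphere (0 : EuclideanSpace ℝ (Fin (m + 1))) 1,
      dist a b ≤ dS a b := fun a b => by
    rw [Subtype.dist_eq, dist_eq_norm, hdS]
    exact chord_le_arccos (hnorm a) (hnorm b)
  have hsymm : ∀ a b, dS a b = dS b a := fun a b => by
    rw [hdS, hdS, real_inner_comm]
  have htri : ∀ a b c, dS a c ≤ dS a b + dS b c := fun a b c => by
    rw [hdS, hdS, hdS]
    exact arccos_inner_triangle (hnorm a) (hnorm b) (hnorm c)
  set p : Fin N × Fin N → Metric.sphere (0 : EuclideanSpace ℝ (Fin (m + 1))) 1 :=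
    fun k => Q k.1 k.2 with hp
  set q : Fin N × Fin N → Metric.sphere (0 : EuclideanSpace ℝ (Fin (m + 1))) 1 :=
    fun k => Q k.2 k.1 with hq'
  set L : Fin N × Fin N → ℝ := fun k => dist (Q k.1 k.2) (Q k.2 k.1) with hL
  have hlb : ∀ (l : List ((Fin N × Fin N) × Bool)) a b,
      dist a b ≤ threadCost dS p q L a b l := by
    intro l
    induction l with
    | nil => intro a b; exact hchord a b
    | cons hd tl ih =>
      intro a b
      obtain ⟨k, bo⟩ := hd
      have hLk : L k = dist (p k) (q k) := rfl
      cases bo with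
      | false =>
        show dist a b ≤ dS a (q k) + L k + threadCost dS p q L (p k) b tl
        have h4 := dist_triangle4 a (q k) (p k) b
        have h1 := hchord a (q k)
        have h2 := ih (p k) b
        have h3 : dist (q k) (p k) = L k := by rw [hLk, dist_comm]
        linarith
      | true =>
        show dist a b ≤ dS a (p k) + L k + threadCost dS p q L (q k) b tl
        have h4 := dist_triangle4 a (p k) (q k) b
        have h1 := hchord a (p k)
        have h2 := ih (q k) b
        linarith [hLk.ge, hLk.le]
  have hne : {c : ℝ | ∃ l : List ((Fin N × Fin N) × Bool),
      c = threadCost dS p q L x y l}.Nonempty := ⟨dS x y, [], rfl⟩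
  have hbdd : BddBelow {c : ℝ | ∃ l : List ((Fin N × Fin N) × Bool),
      c = threadCost dS p q L x y l} := by
    refine ⟨dist x y, ?_⟩
    rintro c ⟨l, rfl⟩
    exact hlb l x y
  constructor
  · refine le_csInf hne ?_
    rintro c ⟨l, rfl⟩
    exact hlb l x y
  · obtain ⟨i, hi⟩ := hcover x
    obtain ⟨j, hj⟩ := hcover y
    have hmem : threadCost dS p q L x y [((i, j), true)] ∈
        {c : ℝ | ∃ l : List ((Fin N × Fin N) × Bool), c = threadCost dS p q L x y l} :=
      ⟨[((i, j), true)], rfl⟩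
    have hle := csInf_le hbdd hmem
    have hval : threadCost dS p q L x y [((i, j), true)] =
        dS x (Q i j) + dist (Q i j) (Q j i) + dS (Q j i) y := rfl
    have h1 : dS x (Q i j) ≤ 3 * ε := by
      have := htri x (P i) (Q i j)
      have := hQ i j
      linarith
    have h2 : dS (Q j i) y ≤ 3 * ε := by
      have ht := htri (Q j i) (P j) y
      have h5 : dS (Q j i) (P j) = ε := by rw [hsymm, hQ]
      have h6 : dS (P j) y = dS y (P j) := hsymm _ _
      linarith
    have h3 : dist (Q i j) (Q j i) ≤ dist x y + 6 * ε := by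
      have h4 := dist_triangle4 (Q i j) x y (Q j i)
      have h5 : dist (Q i j) x ≤ 3 * ε := by
        rw [dist_comm]; exact (hchord x (Q i j)).trans h1
      have h6 : dist y (Q j i) ≤ 3 * ε := by
        have := hchord y (Q j i)
        rw [hsymm] at this
        exact this.trans h2
      linarith
    rw [hval] at hle
    exact hle.trans (by linarith)
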